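/- arXiv:1409.3193 — 3 statements merged into one kernel-verified Lean document; each statement's English description precedes it below -/
import Mathlib

section
/- In the system D(W,D,4) = A(1,0), a nonzero element w = a₁ + a₂·i + a₃·j + a₄·k is a zero divisor if and only if a₁² = a₂² (equivalently a₁ = a₂ or a₁ = −a₂); that is, for w ≠ 0, there exists v ≠ 0 with w·v = 0 if and only if a₁² = a₂². -/
open Quaternion

/-!
The reduced norm `n(w) = (star w * w).re` satisfies `star w * w = w * star w = n(w)` as scalars.
If `n(w) ≠ 0`, left multiplication by `star w` turns `w * v = 0` into `n(w) • v = 0`, so `v = 0`;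
if `n(w) = 0`, then `v = star w` is a nonzero right annihilator of `w ≠ 0`.
In `ℍ[ℝ, 1, 0]` the reduced norm is `a₁² - a₂²`.
-/

namespace QuaternionAlgebra

theorem re_star_mul_self {R : Type*} [CommRing R] {c₁ c₃ : R} (a : ℍ[R,c₁,0,c₃]) :
    (star a * a).re = a.re ^ 2 - c₁ * a.imI ^ 2 - c₃ * a.imJ ^ 2 + c₁ * c₃ * a.imK ^ 2 := by
  simp only [re_mul, re_star, imI_star, imJ_star, imK_star]
  ring

variable {K : Type*} [Field K] {c₁ c₂ c₃ : K}

theorem eq_zero_of_mul_eq_zero_of_re_star_mul_self_ne_zero {a v : ℍ[K,c₁,c₂,c₃]}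
    (ha : (star a * a).re ≠ 0) (hv : a * v = 0) : v = 0 := by
  have : (star a * a).re • v = 0 := by
    rw [← coe_mul_eq_smul, ← star_mul_eq_coe, mul_assoc, hv, mul_zero]
  exact (smul_eq_zero.mp this).resolve_left ha

theorem exists_ne_zero_mul_eq_zero_iff {a : ℍ[K,c₁,c₂,c₃]} (ha : a ≠ 0) :
    (∃ v, v ≠ 0 ∧ a * v = 0) ↔ (star a * a).re = 0 := by
  refine ⟨fun ⟨v, hv, hav⟩ ↦ ?_, fun h ↦ ⟨star a, star_ne_zero.mpr ha, ?_⟩⟩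
  · by_contra hre
    exact hv (eq_zero_of_mul_eq_zero_of_re_star_mul_self_ne_zero hre hav)
  · rw [← star_comm_self', star_mul_eq_coe, h, coe_zero]

end QuaternionAlgebra

/-- In the system D(W,D,4) = A(1,0), a nonzero element `w = ⟨a₁,a₂,a₃,a₄⟩` is a zero divisor iff `a₁² = a₂²`. -/
theorem zeroDivisor_iff_WD (a₁ a₂ a₃ a₄ : ℝ)
    (hw : (⟨a₁, a₂, a₃, a₄⟩ : ℍ[ℝ, (1 : ℝ), (0 : ℝ)]) ≠ 0) :
    (∃ v : ℍ[ℝ, (1 : ℝ), (0 : ℝ)], v ≠ 0 ∧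
        (⟨a₁, a₂, a₃, a₄⟩ : ℍ[ℝ, (1 : ℝ), (0 : ℝ)]) * v = 0) ↔
      a₁ ^ 2 = a₂ ^ 2 := by
  rw [QuaternionAlgebra.exists_ne_zero_mul_eq_zero_iff hw,
    QuaternionAlgebra.re_star_mul_self]
  simp [sub_eq_zero]
end

section
/- (Exponential in D(W,W,4), degenerate case.) Let m₁, m₂, m₃, m₄ be real numbers with m₂² + m₃² − m₄² = 0. Define x₁(t) = e^{m₁t} and x_s(t) = m_s·t·e^{m₁t} for s = 2,3,4. Then for every real t the functions satisfy the associated system: x₁'(t) = m₁x₁ + m₂x₂ + m₃x₃ − m₄x₄, x₂'(t) = m₂x₁ + m₁x₂ + m₄x₃ − m₃x₄, x₃'(t) = m₃x₁ − m₄x₂ + m₁x₃ + m₂x₄, x₄'(t) = m₄x₁ − m₃x₂ + m₂x₃ + m₁x₄ (each as a HasDerivAt statement), and (x₁(0), x₂(0), x₃(0), x₄(0)) = (1, 0, 0, 0). -/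
/-!
Write `M = m₁ + N` with `N = m₂ i + m₃ j + m₄ k`. In `ℍ[ℝ,1,1]` one has `N² = m₂² + m₃² − m₄²`,
which vanishes, so `Exp(tM) = e^{m₁ t} (1 + t N)`. In components: the scalar part satisfies
`x₁' = m₁ x₁ + (m₂² + m₃² − m₄²) t e^{m₁ t} = m₁ x₁`, and in the three vector equations the cross
terms `± m_r m_s t e^{m₁ t}` cancel in pairs.
-/

open Real

lemma hasDerivAt_exp_const_mul (a t : ℝ) :
    HasDerivAt (fun t => exp (a * t)) (a * exp (a * t)) t := by
  simpa [mul_comm] using ((hasDerivAt_id t).const_mul a).exp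

lemma hasDerivAt_const_mul_mul_exp_const_mul (c a t : ℝ) :
    HasDerivAt (fun t => c * t * exp (a * t)) (c * exp (a * t) + a * (c * t * exp (a * t))) t := by
  refine (((hasDerivAt_id t).const_mul c).mul (hasDerivAt_exp_const_mul a t)).congr_deriv ?_
  simp only [id, mul_one]
  ring

/-- Exponential in D(W,W,4) = ℍ[ℝ,1,1], degenerate case. The given functions solve the associated real linear ODE system of Ẋ = M·X with initial value (1,0,0,0). -/
theorem exp_WW_degenerate (m₁ m₂ m₃ m₄ : ℝ)
    (h : m₂ ^ 2 + m₃ ^ 2 - m₄ ^ 2 = 0)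
    (x₁ x₂ x₃ x₄ : ℝ → ℝ)
    (hx₁ : x₁ = fun t => Real.exp (m₁ * t))
    (hx₂ : x₂ = fun t => m₂ * t * Real.exp (m₁ * t))
    (hx₃ : x₃ = fun t => m₃ * t * Real.exp (m₁ * t))
    (hx₄ : x₄ = fun t => m₄ * t * Real.exp (m₁ * t))
    :
    (∀ t : ℝ,
      HasDerivAt x₁ (m₁ * x₁ t + m₂ * x₂ t + m₃ * x₃ t - m₄ * x₄ t) t ∧
      HasDerivAt x₂ (m₂ * x₁ t + m₁ * x₂ t + m₄ * x₃ t - m₃ * x₄ t) t ∧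
      HasDerivAt x₃ (m₃ * x₁ t - m₄ * x₂ t + m₁ * x₃ t + m₂ * x₄ t) t ∧
      HasDerivAt x₄ (m₄ * x₁ t - m₃ * x₂ t + m₂ * x₃ t + m₁ * x₄ t) t) ∧
    x₁ 0 = 1 ∧ x₂ 0 = 0 ∧ x₃ 0 = 0 ∧ x₄ 0 = 0 := by
  subst hx₁ hx₂ hx₃ hx₄
  refine ⟨fun t => ⟨?_, ?_, ?_, ?_⟩, by simp, by simp, by simp, by simp⟩
  · convert hasDerivAt_exp_const_mul m₁ t using 1
    linear_combination t * exp (m₁ * t) * h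
  · convert hasDerivAt_const_mul_mul_exp_const_mul m₂ m₁ t using 1
    ring
  · convert hasDerivAt_const_mul_mul_exp_const_mul m₃ m₁ t using 1
    ring
  · convert hasDerivAt_const_mul_mul_exp_const_mul m₄ m₁ t using 1
    ring
end

section
/- (Exponential in AH, hyperbolic case.) Let m₁, m₂, m₃, m₄ be real numbers with m₃² + m₄² − m₂² > 0 and set μ = √(m₃² + m₄² − m₂²). Define x₁(t) = e^{m₁t}·cosh(μt) and x_s(t) = e^{m₁t}·(m_s/μ)·sinh(μt) for s = 2,3,4. Then for every real t the functions satisfy the associated system: x₁'(t) = m₁x₁ − m₂x₂ + m₃x₃ + m₄x₄, x₂'(t) = m₂x₁ + m₁x₂ − m₃x₄ + m₄x₃, x₃'(t) = m₃x₁ + m₄x₂ + m₁x₃ − m₂x₄, x₄'(t) = m₄x₁ − m₃x₂ + m₂x₃ + m₁x₄ (each as a HasDerivAt statement), and (x₁(0), x₂(0), x₃(0), x₄(0)) = (1, 0, 0, 0). -/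
open Real

theorem hasDerivAt_exp_mul_mul_cosh_mul (a μ t : ℝ) :
    HasDerivAt (fun t => exp (a * t) * cosh (μ * t))
      (a * (exp (a * t) * cosh (μ * t)) + μ * (exp (a * t) * sinh (μ * t))) t := by
  have hexp := ((hasDerivAt_id t).const_mul a).exp
  have hcosh := ((hasDerivAt_id t).const_mul μ).cosh
  simp only [id, mul_one] at hexp hcosh
  exact (hexp.mul hcosh).congr_deriv (by ring)

theorem hasDerivAt_exp_mul_mul_const_mul_sinh_mul (a k μ t : ℝ) :
    HasDerivAt (fun t => exp (a * t) * k * sinh (μ * t))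
      (a * (exp (a * t) * k * sinh (μ * t)) + k * μ * (exp (a * t) * cosh (μ * t))) t := by
  have hexp := ((hasDerivAt_id t).const_mul a).exp
  have hsinh := ((hasDerivAt_id t).const_mul μ).sinh
  simp only [id, mul_one] at hexp hsinh
  exact ((hexp.mul_const k).mul hsinh).congr_deriv (by ring)

/-- Exponential in AH = ℍ[ℝ,−1,1], hyperbolic case. The given functions solve the associated real linear ODE system of Ẋ = M·X with initial value (1,0,0,0). -/
theorem exp_AH_hyperbolic (m₁ m₂ m₃ m₄ : ℝ)
    (h : m₃ ^ 2 + m₄ ^ 2 - m₂ ^ 2 > 0)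
    (x₁ x₂ x₃ x₄ : ℝ → ℝ)
    (μ : ℝ) (hμ : μ = Real.sqrt (m₃ ^ 2 + m₄ ^ 2 - m₂ ^ 2))
    (hx₁ : x₁ = fun t => Real.exp (m₁ * t) * Real.cosh (μ * t))
    (hx₂ : x₂ = fun t => Real.exp (m₁ * t) * (m₂ / μ) * Real.sinh (μ * t))
    (hx₃ : x₃ = fun t => Real.exp (m₁ * t) * (m₃ / μ) * Real.sinh (μ * t))
    (hx₄ : x₄ = fun t => Real.exp (m₁ * t) * (m₄ / μ) * Real.sinh (μ * t))
    :
    (∀ t : ℝ,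
      HasDerivAt x₁ (m₁ * x₁ t - m₂ * x₂ t + m₃ * x₃ t + m₄ * x₄ t) t ∧
      HasDerivAt x₂ (m₂ * x₁ t + m₁ * x₂ t - m₃ * x₄ t + m₄ * x₃ t) t ∧
      HasDerivAt x₃ (m₃ * x₁ t + m₄ * x₂ t + m₁ * x₃ t - m₂ * x₄ t) t ∧
      HasDerivAt x₄ (m₄ * x₁ t - m₃ * x₂ t + m₂ * x₃ t + m₁ * x₄ t) t) ∧
    x₁ 0 = 1 ∧ x₂ 0 = 0 ∧ x₃ 0 = 0 ∧ x₄ 0 = 0 := by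
  have hμ_ne : μ ≠ 0 := (hμ ▸ sqrt_pos.mpr h).ne'
  have hμ_sq : μ ^ 2 = m₃ ^ 2 + m₄ ^ 2 - m₂ ^ 2 := hμ ▸ sq_sqrt h.le
  subst hx₁ hx₂ hx₃ hx₄
  refine ⟨fun t => ⟨?_, ?_, ?_, ?_⟩, by simp, by simp, by simp, by simp⟩
  · refine (hasDerivAt_exp_mul_mul_cosh_mul m₁ μ t).congr_deriv ?_
    linear_combination (norm := skip) (exp (m₁ * t) * sinh (μ * t) / μ) * hμ_sq
    field_simp
    ring
  -- For s = 2, 3, 4 the two cross terms cancel, leaving x_s' = m_s x₁ + m₁ x_s.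
  all_goals
    refine (hasDerivAt_exp_mul_mul_const_mul_sinh_mul m₁ _ μ t).congr_deriv ?_
    field_simp
    ring
end
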